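/- For 0 < p < ∞, a bicomplex-valued function f = p⁺f⁺ + p⁻f⁻ on D lies in the bicomplex Hardy space H^p(D, 𝔹) if and only if (f⁺)* and f⁻ lie in the classical holomorphic Hardy space H^p(D). -/

import Mathlib

open MeasureTheory Filter Topology Set

noncomputable section

/-- The open unit disk in `ℂ`. -/
def 𝔻 : Set ℂ := Metric.ball 0 1

/-- The bicomplex norm of the bicomplex number with idempotent components `a`, `b`:
`‖p⁺a + p⁻b‖_𝔹 = √((|a|² + |b|²)/2)`. -/
def bnorm (a b : ℂ) : ℝ := Real.sqrt ((‖a‖ ^ 2 + ‖b‖ ^ 2) / 2)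

/-- The Wirtinger derivative `∂g/∂z = (1/2)(∂g/∂x − i ∂g/∂y)`. -/
def wirt (g : ℂ → ℂ) (z : ℂ) : ℂ :=
  (fderiv ℝ g z 1 - Complex.I * fderiv ℝ g z Complex.I) / 2

/-- The Wirtinger derivative `∂g/∂z̄ = (1/2)(∂g/∂x + i ∂g/∂y)`. -/
def wirtBar (g : ℂ → ℂ) (z : ℂ) : ℂ :=
  (fderiv ℝ g z 1 + Complex.I * fderiv ℝ g z Complex.I) / 2

/-- The Cauchy–Pompeiu operator `T(g)(z) = −(1/π)∬_D g(ζ)/(ζ − z)`. -/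
def T (g : ℂ → ℂ) (z : ℂ) : ℂ := -(1 / Real.pi : ℝ) • ∫ ζ in 𝔻, g ζ / (ζ - z)

/-- The plus idempotent component of the bicomplex Theodorescu operator:
`(T((g)*))*`, i.e. `z ↦ −(1/π)∬_D g(ζ)/(ζ* − z*)`. -/
def Tp (g : ℂ → ℂ) (z : ℂ) : ℂ :=
  (starRingEnd ℂ) (T (fun ζ => (starRingEnd ℂ) (g ζ)) z)

/-- The point `r e^{iθ}`. -/
def circ (r θ : ℝ) : ℂ := (r : ℂ) * Complex.exp ((θ : ℂ) * Complex.I)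

/-- Finiteness of the bicomplex Hardy `p`-norm of the function with idempotent
components `fp`, `fm`. -/
def HardyFinB (p : ℝ) (fp fm : ℂ → ℂ) : Prop :=
  ∃ M : ℝ, ∀ r ∈ Set.Ioo (0 : ℝ) 1,
    (∫ θ in Set.Ioo 0 (2 * Real.pi), bnorm (fp (circ r θ)) (fm (circ r θ)) ^ p) ≤ M

/-- `𝔹`-holomorphy (`∂̄f = 0`) of the function with idempotent components `fp`, `fm`:
the components are real-differentiable on `𝔻` and satisfy `∂f⁺/∂z = 0`, `∂f⁻/∂z̄ = 0`. -/
def BHolo (fp fm : ℂ → ℂ) : Prop :=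
  ∀ z ∈ 𝔻, DifferentiableAt ℝ fp z ∧ DifferentiableAt ℝ fm z ∧
    wirt fp z = 0 ∧ wirtBar fm z = 0

/-- Membership in the classical holomorphic Hardy space `H^p(D)`. -/
def MemHp (p : ℝ) (g : ℂ → ℂ) : Prop :=
  DifferentiableOn ℂ g 𝔻 ∧
  ∃ M : ℝ, ∀ r ∈ Set.Ioo (0 : ℝ) 1,
    (∫ θ in Set.Ioo 0 (2 * Real.pi), ‖g (circ r θ)‖ ^ p) ≤ M


/-! The condition `∂̄f = 0` splits into the Cauchy–Riemann equations for `(f⁺)*` and `f⁻`, and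
pointwise `‖a‖, ‖b‖ ≤ √2 ‖p⁺a + p⁻b‖_𝔹 ≤ √2 max (‖a‖, ‖b‖)`. Since all functions involved are
continuous on the disk, these inequalities integrate over each circle `|z| = r`, so the
bicomplex integral means are bounded exactly when those of both components are. -/

open ComplexConjugate

theorem IsOpen.differentiableOn_iff_forall_differentiableAt {𝕜 E F : Type*}
    [NontriviallyNormedField 𝕜] [NormedAddCommGroup E] [NormedSpace 𝕜 E]
    [NormedAddCommGroup F] [NormedSpace 𝕜 F] {f : E → F} {s : Set E} (hs : IsOpen s) :
    DifferentiableOn 𝕜 f s ↔ ∀ x ∈ s, DifferentiableAt 𝕜 f x :=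
  ⟨fun h _ hx => h.differentiableAt (hs.mem_nhds hx),
    fun h x hx => (h x hx).differentiableWithinAt⟩

theorem isOpen_disk : IsOpen 𝔻 := Metric.isOpen_ball

section CauchyRiemann

variable {g : ℂ → ℂ} {z : ℂ}

theorem wirtBar_eq_zero_iff :
    wirtBar g z = 0 ↔ fderiv ℝ g z Complex.I = Complex.I • fderiv ℝ g z 1 := by
  rw [wirtBar, div_eq_zero_iff, smul_eq_mul]
  refine ⟨fun h => ?_, fun h => ?_⟩
  · rcases h with h | h
    · linear_combination -Complex.I * h + fderiv ℝ g z Complex.I * Complex.I_sq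
    · norm_num at h
  · left
    linear_combination Complex.I * h + fderiv ℝ g z 1 * Complex.I_sq

theorem differentiableAt_complex_iff_wirtBar_eq_zero :
    DifferentiableAt ℂ g z ↔ DifferentiableAt ℝ g z ∧ wirtBar g z = 0 := by
  rw [differentiableAt_complex_iff_differentiableAt_real, wirtBar_eq_zero_iff]

theorem wirtBar_conj (hg : DifferentiableAt ℝ g z) :
    wirtBar (fun w => conj (g w)) z = conj (wirt g z) := by
  have hconj : HasFDerivAt (fun w => conj (g w))
      ((Complex.conjCLE : ℂ →L[ℝ] ℂ).comp (fderiv ℝ g z)) z :=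
    Complex.conjCLE.hasFDerivAt.comp z hg.hasFDerivAt
  rw [wirtBar, wirt, hconj.fderiv]
  simp only [ContinuousLinearMap.coe_comp, Function.comp_apply, ContinuousLinearEquiv.coe_coe,
    Complex.conjCLE_apply, map_div₀, map_sub, map_mul, Complex.conj_I, map_ofNat]
  ring

theorem differentiableAt_complex_conj_iff_wirt_eq_zero :
    DifferentiableAt ℂ (fun w => conj (g w)) z ↔ DifferentiableAt ℝ g z ∧ wirt g z = 0 := by
  rw [differentiableAt_complex_iff_wirtBar_eq_zero,
    show (fun w => conj (g w)) = Complex.conjCLE ∘ g from rfl,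
    Complex.conjCLE.comp_differentiableAt_iff]
  refine and_congr_right fun hg => ?_
  simp only [Function.comp_def, Complex.conjCLE_apply]
  rw [wirtBar_conj hg, map_eq_zero]

end CauchyRiemann

theorem bHolo_iff {fp fm : ℂ → ℂ} :
    BHolo fp fm ↔ DifferentiableOn ℂ (fun z => conj (fp z)) 𝔻 ∧ DifferentiableOn ℂ fm 𝔻 := by
  simp only [isOpen_disk.differentiableOn_iff_forall_differentiableAt,
    differentiableAt_complex_conj_iff_wirt_eq_zero, ← forall₂_and]
  simp only [differentiableAt_complex_iff_wirtBar_eq_zero, BHolo]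
  exact forall₂_congr fun _ _ => by tauto

section BicomplexNorm

variable (a b : ℂ)

theorem bnorm_nonneg : 0 ≤ bnorm a b := Real.sqrt_nonneg _

theorem sqrt_two_mul_bnorm : √2 * bnorm a b = √(‖a‖ ^ 2 + ‖b‖ ^ 2) := by
  rw [bnorm, ← Real.sqrt_mul zero_le_two]
  ring_nf

theorem norm_left_le_sqrt_two_mul_bnorm : ‖a‖ ≤ √2 * bnorm a b := by
  rw [sqrt_two_mul_bnorm, Real.le_sqrt (norm_nonneg a) (by positivity)]
  nlinarith [sq_nonneg ‖b‖]

theorem norm_right_le_sqrt_two_mul_bnorm : ‖b‖ ≤ √2 * bnorm a b := by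
  rw [sqrt_two_mul_bnorm, Real.le_sqrt (norm_nonneg b) (by positivity)]
  nlinarith [sq_nonneg ‖a‖]

theorem bnorm_le_max : bnorm a b ≤ max ‖a‖ ‖b‖ := by
  rw [bnorm, Real.sqrt_le_left (by positivity)]
  have := pow_le_pow_left₀ (norm_nonneg a) (le_max_left ‖a‖ ‖b‖) 2
  have := pow_le_pow_left₀ (norm_nonneg b) (le_max_right ‖a‖ ‖b‖) 2
  linarith

variable {a b} {p : ℝ}

theorem bnorm_rpow_le_add (hp : 0 ≤ p) : bnorm a b ^ p ≤ ‖a‖ ^ p + ‖b‖ ^ p := by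
  calc bnorm a b ^ p ≤ max ‖a‖ ‖b‖ ^ p := Real.rpow_le_rpow (bnorm_nonneg a b) (bnorm_le_max a b) hp
    _ = max (‖a‖ ^ p) (‖b‖ ^ p) := Real.rpow_max (norm_nonneg a) (norm_nonneg b) hp
    _ ≤ _ := max_le_add_of_nonneg (by positivity) (by positivity)

theorem norm_left_rpow_le (hp : 0 ≤ p) : ‖a‖ ^ p ≤ √2 ^ p * bnorm a b ^ p := by
  rw [← Real.mul_rpow (by positivity) (bnorm_nonneg a b)]
  exact Real.rpow_le_rpow (norm_nonneg a) (norm_left_le_sqrt_two_mul_bnorm a b) hp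

theorem norm_right_rpow_le (hp : 0 ≤ p) : ‖b‖ ^ p ≤ √2 ^ p * bnorm a b ^ p := by
  rw [← Real.mul_rpow (by positivity) (bnorm_nonneg a b)]
  exact Real.rpow_le_rpow (norm_nonneg b) (norm_right_le_sqrt_two_mul_bnorm a b) hp

end BicomplexNorm

theorem norm_circ (r θ : ℝ) : ‖circ r θ‖ = |r| := by
  simp [circ, Complex.norm_exp_ofReal_mul_I]

theorem circ_mem_disk {r : ℝ} (hr : r ∈ Ioo (0 : ℝ) 1) (θ : ℝ) : circ r θ ∈ 𝔻 := by
  rw [𝔻, mem_ball_zero_iff, norm_circ, abs_of_pos hr.1]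
  exact hr.2

theorem continuous_circ (r : ℝ) : Continuous (circ r) := by
  unfold circ
  fun_prop

def BddIntegralMeans (F : ℂ → ℝ) : Prop :=
  ∃ M : ℝ, ∀ r ∈ Ioo (0 : ℝ) 1, (∫ θ in Ioo 0 (2 * Real.pi), F (circ r θ)) ≤ M

theorem hardyFinB_iff_bddIntegralMeans {p : ℝ} {fp fm : ℂ → ℂ} :
    HardyFinB p fp fm ↔ BddIntegralMeans fun z => bnorm (fp z) (fm z) ^ p :=
  Iff.rfl

theorem memHp_iff_bddIntegralMeans {p : ℝ} {g : ℂ → ℂ} :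
    MemHp p g ↔ DifferentiableOn ℂ g 𝔻 ∧ BddIntegralMeans fun z => ‖g z‖ ^ p :=
  Iff.rfl

section IntegralMeans

variable {F G : ℂ → ℝ}

theorem integrableOn_comp_circ (hF : ContinuousOn F 𝔻) {r : ℝ} (hr : r ∈ Ioo (0 : ℝ) 1) :
    IntegrableOn (fun θ => F (circ r θ)) (Ioo 0 (2 * Real.pi)) :=
  (hF.comp_continuous (continuous_circ r) (circ_mem_disk hr)).integrableOn_Icc.mono_set
    Ioo_subset_Icc_self

theorem BddIntegralMeans.mono (hG : BddIntegralMeans G) (hF : ContinuousOn F 𝔻)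
    (hG' : ContinuousOn G 𝔻) (hFG : ∀ z ∈ 𝔻, F z ≤ G z) : BddIntegralMeans F := by
  obtain ⟨M, hM⟩ := hG
  refine ⟨M, fun r hr => le_trans ?_ (hM r hr)⟩
  exact setIntegral_mono_on (integrableOn_comp_circ hF hr) (integrableOn_comp_circ hG' hr)
    measurableSet_Ioo fun θ _ => hFG _ (circ_mem_disk hr θ)

theorem BddIntegralMeans.const_mul (hF : BddIntegralMeans F) {c : ℝ} (hc : 0 ≤ c) :
    BddIntegralMeans fun z => c * F z := by
  obtain ⟨M, hM⟩ := hF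
  refine ⟨c * M, fun r hr => ?_⟩
  rw [integral_const_mul]
  exact mul_le_mul_of_nonneg_left (hM r hr) hc

theorem BddIntegralMeans.add (hF : BddIntegralMeans F) (hG : BddIntegralMeans G)
    (hF' : ContinuousOn F 𝔻) (hG' : ContinuousOn G 𝔻) : BddIntegralMeans fun z => F z + G z := by
  obtain ⟨M, hM⟩ := hF
  obtain ⟨N, hN⟩ := hG
  refine ⟨M + N, fun r hr => ?_⟩
  rw [integral_add (integrableOn_comp_circ hF' hr) (integrableOn_comp_circ hG' hr)]
  exact add_le_add (hM r hr) (hN r hr)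

end IntegralMeans

theorem ContinuousOn.norm_rpow {f : ℂ → ℂ} {s : Set ℂ} (hf : ContinuousOn f s) {p : ℝ}
    (hp : 0 ≤ p) : ContinuousOn (fun z => ‖f z‖ ^ p) s :=
  hf.norm.rpow_const fun _ _ => Or.inr hp

theorem ContinuousOn.bnorm_rpow {f g : ℂ → ℂ} {s : Set ℂ} (hf : ContinuousOn f s)
    (hg : ContinuousOn g s) {p : ℝ} (hp : 0 ≤ p) :
    ContinuousOn (fun z => bnorm (f z) (g z) ^ p) s := by
  refine ContinuousOn.rpow_const ?_ fun _ _ => Or.inr hp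
  unfold bnorm
  fun_prop

theorem hardyFinB_iff {p : ℝ} (hp : 0 ≤ p) {fp fm : ℂ → ℂ} (hfp : ContinuousOn fp 𝔻)
    (hfm : ContinuousOn fm 𝔻) :
    HardyFinB p fp fm ↔
      (BddIntegralMeans fun z => ‖fp z‖ ^ p) ∧ BddIntegralMeans fun z => ‖fm z‖ ^ p := by
  rw [hardyFinB_iff_bddIntegralMeans]
  have hB := hfp.bnorm_rpow hfm hp
  have hBc := hB.const_mul (√2 ^ p)
  refine ⟨fun h => ⟨?_, ?_⟩, fun ⟨h₁, h₂⟩ => ?_⟩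
  · exact (h.const_mul (by positivity)).mono (hfp.norm_rpow hp) hBc
      fun _ _ => norm_left_rpow_le hp
  · exact (h.const_mul (by positivity)).mono (hfm.norm_rpow hp) hBc
      fun _ _ => norm_right_rpow_le hp
  · exact (h₁.add h₂ (hfp.norm_rpow hp) (hfm.norm_rpow hp)).mono hB
      ((hfp.norm_rpow hp).add (hfm.norm_rpow hp)) fun _ _ => bnorm_rpow_le_add hp

/-- for `0 < p < ∞`, `f = p⁺f⁺ + p⁻f⁻` lies in the bicomplex Hardy
space `H^p(D,𝔹)` (i.e. `∂̄f = 0` and finite bicomplex Hardy norm) iff `(f⁺)*` and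
`f⁻` lie in the classical holomorphic Hardy space `H^p(D)`. -/
theorem stmt10 (p : ℝ) (hp : 0 < p) (fp fm : ℂ → ℂ) :
    (BHolo fp fm ∧ HardyFinB p fp fm) ↔
      (MemHp p (fun z => (starRingEnd ℂ) (fp z)) ∧ MemHp p fm) := by
  rw [bHolo_iff, memHp_iff_bddIntegralMeans, memHp_iff_bddIntegralMeans, and_and_and_comm]
  simp only [Complex.norm_conj]
  refine and_congr_right fun ⟨hdp, hdm⟩ => hardyFinB_iff hp.le ?_ hdm.continuousOn
  simpa [Function.comp_def] using Complex.continuous_conj.comp_continuousOn hdp.continuousOn
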